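/- Let g₁ : ℝ → ℝ be continuous and strictly increasing on [0, ∞), and let g₂ : ℝ → ℝ be continuous on [0, ∞), strictly increasing on [0, m] and strictly decreasing on [m, ∞) for some m > 0. If g₂(0) < g₁(0), then g(x) = min(g₁(x), g₂(x)) has exactly one local maximum on [0, ∞) in the sense that there exists x* such that g is non-decreasing on [0, x*] and non-increasing on [x*, ∞), whenever g₁ and g₂ cross in exactly two points A < B with A < m < B. -/

import Mathlib

/-!
On `[0, m]` both `g₁` and `g₂` increase, so their minimum does too. Since the crossings are
`A < m` and `B`, the continuous functions `g₁`, `g₂` do not cross on the connected set `[m, B)`,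
so the same one of them is the smaller throughout `[m, B)`; beyond `B` the decreasing `g₂` lies
below the increasing `g₁`. If `g₂` is the smaller on `[m, B)`, the minimum is `g₂` on `[m, ∞)`
and peaks at `m`; otherwise it is `g₁` on `[m, B]` and `g₂` on `[B, ∞)`, and it peaks at `B`.
-/

open Set

theorem IsPreconnected.forall_lt_or_forall_gt {X α : Type*} [TopologicalSpace X] [LinearOrder α]
    [TopologicalSpace α] [OrderClosedTopology α] {s : Set X} (hs : IsPreconnected s)
    {f g : X → α} (hf : ContinuousOn f s) (hg : ContinuousOn g s)
    (hne : ∀ x ∈ s, f x ≠ g x) : (∀ x ∈ s, f x < g x) ∨ (∀ x ∈ s, g x < f x) := by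
  by_contra! h
  obtain ⟨⟨x, hx, hgfx⟩, ⟨y, hy, hfgy⟩⟩ := h
  obtain ⟨c, hc, hfgc⟩ := hs.intermediate_value₂ hy hx hf hg hfgy hgfx
  exact hne c hc hfgc

section

variable {α β : Type*} [Preorder α] [LinearOrder β] {f g : α → β} {s : Set α}

theorem MonotoneOn.min_of_le (hf : MonotoneOn f s) (hle : ∀ x ∈ s, f x ≤ g x) :
    MonotoneOn (fun x => min (f x) (g x)) s :=
  hf.congr fun x hx => (min_eq_left (hle x hx)).symm

theorem AntitoneOn.min_of_le (hg : AntitoneOn g s) (hle : ∀ x ∈ s, g x ≤ f x) :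
    AntitoneOn (fun x => min (f x) (g x)) s :=
  hg.congr fun x hx => (min_eq_right (hle x hx)).symm

theorem AntitoneOn.le_of_monotoneOn_Ici {b : α} (hg : AntitoneOn g (Ici b))
    (hf : MonotoneOn f (Ici b)) (hb : g b ≤ f b) : ∀ x ∈ Ici b, g x ≤ f x := fun _ hx =>
  (hg self_mem_Ici hx hx).trans (hb.trans (hf self_mem_Ici hx hx))

end

theorem stmt_4_general (g₁ g₂ : ℝ → ℝ) (m A B : ℝ)
    (hc₁ : ContinuousOn g₁ (Ici 0)) (hmono₁ : StrictMonoOn g₁ (Ici 0))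
    (hc₂ : ContinuousOn g₂ (Ici 0))
    (hmono₂ : StrictMonoOn g₂ (Icc 0 m)) (hanti₂ : StrictAntiOn g₂ (Ici m))
    (hcross : {x : ℝ | 0 ≤ x ∧ g₁ x = g₂ x} = {A, B})
    (hAm : A < m) (hmB : m < B) :
    ∃ x : ℝ, 0 ≤ x ∧
      MonotoneOn (fun y => min (g₁ y) (g₂ y)) (Icc 0 x) ∧
      AntitoneOn (fun y => min (g₁ y) (g₂ y)) (Ici x) := by
  rw [Set.ext_iff] at hcross
  have hA := (hcross A).2 (mem_insert A {B})
  have hB := (hcross B).2 (mem_insert_of_mem A rfl)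
  have hm : 0 ≤ m := hA.1.trans hAm.le
  have hIco : Ico m B ⊆ Ici 0 := fun x hx => hm.trans hx.1
  have hne : ∀ x ∈ Ico m B, g₁ x ≠ g₂ x := by
    intro x hx hx_eq
    rcases (hcross x).1 ⟨hIco hx, hx_eq⟩ with rfl | rfl
    · exact hAm.not_ge hx.1
    · exact hx.2.false
  have hrise : MonotoneOn (fun y => min (g₁ y) (g₂ y)) (Icc 0 m) :=
    (hmono₁.monotoneOn.mono Icc_subset_Ici_self).min hmono₂.monotoneOn
  have hfall₂ : AntitoneOn g₂ (Ici B) := hanti₂.antitoneOn.mono (Ici_subset_Ici.2 hmB.le)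
  have htail : ∀ x ∈ Ici B, g₂ x ≤ g₁ x := hfall₂.le_of_monotoneOn_Ici
    (hmono₁.monotoneOn.mono (Ici_subset_Ici.2 hB.1)) hB.2.ge
  rcases isPreconnected_Ico.forall_lt_or_forall_gt (hc₁.mono hIco) (hc₂.mono hIco) hne
    with hlt | hgt
  · have hmid : ∀ x ∈ Icc m B, g₁ x ≤ g₂ x := fun x hx =>
      hx.2.lt_or_eq.elim (fun hxB => (hlt x ⟨hx.1, hxB⟩).le) fun hxB => hxB ▸ hB.2.le
    have hclimb : MonotoneOn (fun y => min (g₁ y) (g₂ y)) (Icc m B) :=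
      (hmono₁.monotoneOn.mono fun x hx => hm.trans hx.1).min_of_le hmid
    refine ⟨B, hB.1, ?_, hfall₂.min_of_le htail⟩
    rw [← Icc_union_Icc_eq_Icc hm hmB.le]
    exact hrise.union_right hclimb (isGreatest_Icc hm) (isLeast_Icc hmB.le)
  · have hbelow : ∀ x ∈ Ici m, g₂ x ≤ g₁ x := fun x hx =>
      (lt_or_ge x B).elim (fun hxB => (hgt x ⟨hx, hxB⟩).le) (htail x)
    exact ⟨m, hm, hrise, hanti₂.antitoneOn.min_of_le hbelow⟩

theorem stmt_4 (g₁ g₂ : ℝ → ℝ) (m A B : ℝ)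
    (hm : 0 < m)
    (hc₁ : ContinuousOn g₁ (Ici 0)) (hmono₁ : StrictMonoOn g₁ (Ici 0))
    (hc₂ : ContinuousOn g₂ (Ici 0))
    (hmono₂ : StrictMonoOn g₂ (Icc 0 m)) (hanti₂ : StrictAntiOn g₂ (Ici m))
    (h0 : g₂ 0 < g₁ 0)
    (hcross : {x : ℝ | 0 ≤ x ∧ g₁ x = g₂ x} = {A, B})
    (hAB : A < B) (hAm : A < m) (hmB : m < B) :
    ∃ x : ℝ, 0 ≤ x ∧
      MonotoneOn (fun y => min (g₁ y) (g₂ y)) (Icc 0 x) ∧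
      AntitoneOn (fun y => min (g₁ y) (g₂ y)) (Ici x) :=
  stmt_4_general g₁ g₂ m A B hc₁ hmono₁ hc₂ hmono₂ hanti₂ hcross hAm hmB
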